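/- arXiv:2206.06483 — 2 statements merged into one kernel-verified Lean document; each statement's English description precedes it below -/
import Mathlib

section
/- With the operators T^{q^a}_m as above, the commutator satisfies [T^{q^a}_m, T^{q^b}_n] = ((q^{a+b} − 1)(q^{−na} − q^{−mb})/((q^a − 1)(q^b − 1)))·T^{q^{a+b}}_{m+n} − ((q^{−na} − 1)/(q^b − 1))·T^{q^a}_{m+n} + ((q^{−mb} − 1)/(q^a − 1))·T^{q^b}_{m+n}, as operators on Laurent polynomials. -/
/-!
Both sides are linear in `f`, so it suffices to compare them on a monomial `z^k`, which both
send to a multiple of `z^{m+n+k}`. Comparing coefficients leaves a rational identity between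
`q`-numbers in `Q = q^a` and `P = q^b`, valid as soon as `Q`, `P` and `QP` differ from `1`.
-/

/-- The q^a-deformed number `[n]_{q^a} = (1 - q^{a n})/(1 - q^a)`. -/
noncomputable def qaNum (q : ℝ) (a : ℕ) (n : ℤ) : ℝ :=
  (1 - q ^ ((a : ℤ) * n)) / (1 - q ^ (a : ℤ))

/-- The operator `T^{q^a}_m` on Laurent polynomials (realized as `ℤ →₀ ℝ`),
sending the monomial `z^k` to `-[m+k]_{q^a} z^{m+k}`. -/
noncomputable def Tq (q : ℝ) (a : ℕ) (m : ℤ) (f : ℤ →₀ ℝ) : ℤ →₀ ℝ :=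
  f.sum fun k c => Finsupp.single (m + k) (-(qaNum q a (m + k)) * c)

noncomputable def qNum {K : Type*} [Field K] (Q : K) (N : ℤ) : K :=
  (1 - Q ^ N) / (1 - Q)

lemma qaNum_eq_qNum (q : ℝ) (a : ℕ) (N : ℤ) : qaNum q a N = qNum (q ^ a) N := by
  rw [qaNum, qNum, zpow_mul, zpow_natCast]

theorem qNum_commutator {K : Type*} [Field K] {Q P : K} (hQ₀ : Q ≠ 0) (hP₀ : P ≠ 0)
    (hQ : Q ≠ 1) (hP : P ≠ 1) (hQP : Q * P ≠ 1) (m n k : ℤ) :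
    qNum Q (m + n + k) * qNum P (n + k) - qNum P (m + n + k) * qNum Q (m + k) =
      -((Q * P - 1) * (Q ^ (-n) - P ^ (-m)) / ((Q - 1) * (P - 1))) * qNum (Q * P) (m + n + k) +
      (Q ^ (-n) - 1) / (P - 1) * qNum Q (m + n + k) -
      (P ^ (-m) - 1) / (Q - 1) * qNum P (m + n + k) := by
  have hQ' : Q - 1 ≠ 0 := sub_ne_zero.mpr hQ
  have hP' : P - 1 ≠ 0 := sub_ne_zero.mpr hP
  have h1Q : 1 - Q ≠ 0 := sub_ne_zero.mpr hQ.symm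
  have h1P : 1 - P ≠ 0 := sub_ne_zero.mpr hP.symm
  have h1QP : 1 - Q * P ≠ 0 := sub_ne_zero.mpr hQP.symm
  simp only [qNum, zpow_add₀ hQ₀, zpow_add₀ hP₀, mul_zpow, zpow_neg]
  field_simp
  ring

lemma zpow_neg_mul_natCast {α : Type*} [DivisionMonoid α] (x : α) (n : ℤ) (a : ℕ) :
    x ^ (-(n * (a : ℤ))) = (x ^ a) ^ (-n) := by
  rw [← zpow_natCast, ← zpow_mul, mul_neg, mul_comm]

noncomputable def TqLinear (q : ℝ) (a : ℕ) (m : ℤ) : (ℤ →₀ ℝ) →ₗ[ℝ] (ℤ →₀ ℝ) :=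
  Finsupp.lsum ℝ fun k =>
    (Finsupp.lsingle (m + k)).comp (LinearMap.mulLeft ℝ (-qaNum q a (m + k)))

lemma Tq_eq_TqLinear (q : ℝ) (a : ℕ) (m : ℤ) : Tq q a m = TqLinear q a m := rfl

lemma TqLinear_single (q : ℝ) (a : ℕ) (m k : ℤ) (c : ℝ) :
    TqLinear q a m (Finsupp.single k c) = Finsupp.single (m + k) (-qaNum q a (m + k) * c) := by
  simp [TqLinear]

theorem Tq_commutator (q : ℝ) (hq : 0 < q) (hq1 : q ≠ 1) (a b : ℕ) (ha : 0 < a) (hb : 0 < b)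
    (m n : ℤ) (f : ℤ →₀ ℝ) :
    Tq q a m (Tq q b n f) - Tq q b n (Tq q a m f) =
      ((q ^ (a + b) - 1) * (q ^ (-(n * (a : ℤ))) - q ^ (-(m * (b : ℤ)))) /
          ((q ^ a - 1) * (q ^ b - 1))) • Tq q (a + b) (m + n) f -
      ((q ^ (-(n * (a : ℤ))) - 1) / (q ^ b - 1)) • Tq q a (m + n) f +
      ((q ^ (-(m * (b : ℤ))) - 1) / (q ^ a - 1)) • Tq q b (m + n) f := by
  have pow_ne_one {c : ℕ} (hc : 0 < c) : q ^ c ≠ 1 :=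
    mt (pow_eq_one_iff_of_nonneg hq.le hc.ne').mp hq1
  simp only [Tq_eq_TqLinear, zpow_neg_mul_natCast]
  refine LinearMap.congr_fun
    (f := TqLinear q a m ∘ₗ TqLinear q b n - TqLinear q b n ∘ₗ TqLinear q a m)
    (g := (_ : ℝ) • TqLinear q (a + b) (m + n) - (_ : ℝ) • TqLinear q a (m + n) +
      (_ : ℝ) • TqLinear q b (m + n))
    (Finsupp.lhom_ext fun k c => ?_) f
  have key := qNum_commutator (pow_ne_zero a hq.ne') (pow_ne_zero b hq.ne')
    (pow_ne_one ha) (pow_ne_one hb) (pow_add q a b ▸ pow_ne_one (Nat.add_pos_left ha b)) m n k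
  simp only [LinearMap.sub_apply, LinearMap.add_apply, LinearMap.smul_apply,
    LinearMap.comp_apply, TqLinear_single, Finsupp.smul_single, qaNum_eq_qNum, smul_eq_mul]
  rw [show m + (n + k) = m + n + k by ring, show n + (m + k) = m + n + k by ring, pow_add,
    ← Finsupp.single_sub, ← Finsupp.single_sub, ← Finsupp.single_add]
  congr 1
  linear_combination c * key
end

section
/- Let q ≠ 0, 1 be real, [n]_q = (1 − q^n)/(1 − q). Define operators on ℂ[z,z⁻¹]: T_m(z^k) = −[m+k]_q z^{m+k} and (on the super-extension with Grassmann variable θ) 𝕋_n acting as −θ·[n+k]_q z^{n+k}. Then for a = b = 1 and integers m, n, the commutator [T_m, T_n] = ((q^{−n} − q^{−m})/(q − 1))·[2]_q·T^{q²}_{m+n} − (1/(q−1))·((q^{−n} − 1) − (q^{−m} − 1))·T_{m+n}, where T^{q²}_r(z^k) = −[r+k]_{q²} z^{r+k}. -/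
lemma qaNum_one (q : ℝ) (n : ℤ) : qaNum q 1 n = (1 - q ^ n) / (1 - q) := by
  simp [qaNum]

lemma qaNum_two (q : ℝ) (n : ℤ) : qaNum q 2 n = (1 - (q ^ n) ^ 2) / (1 - q ^ 2) := by
  rw [qaNum, zpow_mul']
  norm_cast

lemma qaNum_one_sub_qaNum_one (q : ℝ) (i j : ℤ) :
    qaNum q 1 j - qaNum q 1 i = (q ^ i - q ^ j) / (1 - q) := by
  rw [qaNum_one, qaNum_one, ← sub_div]; ring_nf

lemma qaNum_one_two_mul_qaNum_two {q : ℝ} (hq : q ^ 2 ≠ 1) (n : ℤ) :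
    qaNum q 1 2 * qaNum q 2 n = qaNum q 1 n * (1 + q ^ n) := by
  have h1 : 1 - q ≠ 0 := sub_ne_zero.mpr (by rintro rfl; simp at hq)
  have h2 : 1 - q ^ 2 ≠ 0 := sub_ne_zero.mpr (Ne.symm hq)
  rw [qaNum_one, qaNum_one, qaNum_two]
  field_simp
  ring

lemma qaNum_mul_qaNum_sub_qaNum {q : ℝ} (hq0 : q ≠ 0) (hq : q ^ 2 ≠ 1) (m n k : ℤ) :
    qaNum q 1 (m + n + k) * (qaNum q 1 (n + k) - qaNum q 1 (m + k)) =
      (q ^ (-n) - q ^ (-m)) / (q - 1) *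
        (qaNum q 1 (m + n + k) - qaNum q 1 2 * qaNum q 2 (m + n + k)) := by
  have h1 : q - 1 ≠ 0 := sub_ne_zero.mpr (by rintro rfl; simp at hq)
  have hm : q ^ (m + n + k) * q ^ (-n) = q ^ (m + k) := by rw [← zpow_add₀ hq0]; ring_nf
  have hn : q ^ (m + n + k) * q ^ (-m) = q ^ (n + k) := by rw [← zpow_add₀ hq0]; ring_nf
  rw [qaNum_one_two_mul_qaNum_two hq, qaNum_one_sub_qaNum_one, ← hm, ← hn,
    show (1:ℝ) - q = -(q - 1) by ring]
  field_simp
  ring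

lemma Tq_zero (q : ℝ) (a : ℕ) (m : ℤ) : Tq q a m 0 = 0 :=
  Finsupp.sum_zero_index

lemma Tq_single (q : ℝ) (a : ℕ) (m k : ℤ) (c : ℝ) :
    Tq q a m (Finsupp.single k c) = Finsupp.single (m + k) (-qaNum q a (m + k) * c) :=
  Finsupp.sum_single_index (by simp)

lemma Tq_add (q : ℝ) (a : ℕ) (m : ℤ) (f g : ℤ →₀ ℝ) :
    Tq q a m (f + g) = Tq q a m f + Tq q a m g :=
  Finsupp.sum_add_index' (fun _ => by simp) (fun _ _ _ => by rw [mul_add, Finsupp.single_add])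

theorem Tq_commutator_a_eq_one (q : ℝ) (hq : 0 < q) (hq1 : q ≠ 1) (m n : ℤ) (f : ℤ →₀ ℝ) :
    Tq q 1 m (Tq q 1 n f) - Tq q 1 n (Tq q 1 m f) =
      (((q ^ (-n) - q ^ (-m)) / (q - 1)) * qaNum q 1 2) • Tq q 2 (m + n) f -
      ((1 / (q - 1)) * ((q ^ (-n) - 1) - (q ^ (-m) - 1))) • Tq q 1 (m + n) f := by
  have hq2 : q ^ 2 ≠ 1 := by
    rwa [Ne, pow_eq_one_iff_of_nonneg hq.le two_ne_zero]
  induction f using Finsupp.induction_linear with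
  | zero => simp [Tq_zero]
  | add f g hf hg =>
    simp only [Tq_add, smul_add]
    rw [add_sub_add_comm, hf, hg]
    abel
  | single k c =>
    simp only [Tq_single, Finsupp.smul_single, smul_eq_mul, ← add_assoc, add_comm n m,
      ← Finsupp.single_sub]
    congr 1
    linear_combination c * qaNum_mul_qaNum_sub_qaNum hq.ne' hq2 m n k
end
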